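/- arXiv:2405.09930 — 9 statements merged into one kernel-verified Lean document; each statement's English description precedes it below -/
import Mathlib

section
/- Let M be a metric space, y ∈ M, r ∈ (0,1], and let δ = ρ(y, M \ B(y, r/2)) with M \ B(y,r/2) nonempty. Define f(x) = max(min(δ,1) − ρ(x,y), 0). Then the Lipschitz constant of f satisfies lip(f) ≥ min(1, 1/δ), i.e., for every ε > 0 there exist points x, z ∈ M with x ≠ z and |f(x) − f(z)| ≥ (min(1,1/δ) − ε)·ρ(x,z). -/
/-!
Write `δ` for the distance from `y` to `S = M \ B(y, r/2)`, so `δ ≥ r/2 > 0`, and `c = min 1 (1/δ)`.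
The cone `f` takes the value `min δ 1 = c δ` at `y` and vanishes on `S`, while `S` contains points
`z` with `ρ(y, z)` arbitrarily close to `δ`; the pair `(y, z)` then has slope close to `c`.
-/

open Metric

section

variable {M : Type*} [MetricSpace M]

theorem le_infDist_compl_ball {y : M} {r : ℝ} (hne : (ball y r)ᶜ.Nonempty) :
    r ≤ infDist y (ball y r)ᶜ :=
  (le_infDist hne).2 fun z hz => by
    simpa only [Set.mem_compl_iff, mem_ball', not_lt] using hz

theorem exists_mem_mul_dist_le_of_lt_div_infDist {y : M} {S : Set M} (hS : S.Nonempty)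
    (hδ : 0 < infDist y S) {a K : ℝ} (ha : 0 ≤ a) (hK : K < a / infDist y S) :
    ∃ z ∈ S, K * dist y z ≤ a := by
  rcases le_or_gt K 0 with hK0 | hK0
  · obtain ⟨z, hz⟩ := hS
    exact ⟨z, hz, (mul_nonpos_of_nonpos_of_nonneg hK0 dist_nonneg).trans ha⟩
  · have hδa : infDist y S < a / K := by
      rw [lt_div_iff₀ hδ] at hK
      rwa [lt_div_iff₀' hK0]
    obtain ⟨z, hz, hdist⟩ := (infDist_lt_iff hS).1 hδa
    exact ⟨z, hz, ((lt_div_iff₀' hK0).1 hdist).le⟩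

end

theorem stmt_1_general {M : Type*} [MetricSpace M] (y : M) (r : ℝ) (hr : 0 < r)
    (hne : ((Metric.ball y (r / 2))ᶜ : Set M).Nonempty) :
    ∀ ε > (0 : ℝ), ∃ x z : M, x ≠ z ∧
      |max (min (Metric.infDist y ((Metric.ball y (r / 2))ᶜ : Set M)) 1 - dist x y) 0 -
        max (min (Metric.infDist y ((Metric.ball y (r / 2))ᶜ : Set M)) 1 - dist z y) 0| ≥
      (min 1 (1 / Metric.infDist y ((Metric.ball y (r / 2))ᶜ : Set M)) - ε) * dist x z := by
  intro ε hε
  set δ := infDist y (ball y (r / 2))ᶜ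
  have hδ : 0 < δ := by linarith [le_infDist_compl_ball hne]
  have hslope : min δ 1 / δ = min 1 (1 / δ) := by
    rw [← min_div_div_right hδ.le, div_self hδ.ne']
  have hpeak : 0 ≤ min δ 1 := le_min hδ.le zero_le_one
  obtain ⟨z, hzS, hz⟩ := exists_mem_mul_dist_le_of_lt_div_infDist hne hδ hpeak
    (K := min 1 (1 / δ) - ε) (by rw [hslope]; linarith)
  have hδz : δ ≤ dist z y := dist_comm y z ▸ infDist_le_dist_of_mem hzS
  refine ⟨y, z, fun hyz => by rw [hyz, dist_self] at hδz; linarith, ?_⟩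
  rwa [dist_self, sub_zero, max_eq_left hpeak,
    max_eq_right (by linarith [min_le_left δ 1]), sub_zero, abs_of_nonneg hpeak]

theorem stmt_1 {M : Type*} [MetricSpace M] (y : M) (r : ℝ) (hr : 0 < r) (hr1 : r ≤ 1)
    (hne : ((Metric.ball y (r / 2))ᶜ : Set M).Nonempty) :
    ∀ ε > (0 : ℝ), ∃ x z : M, x ≠ z ∧
      |max (min (Metric.infDist y ((Metric.ball y (r / 2))ᶜ : Set M)) 1 - dist x y) 0 -
        max (min (Metric.infDist y ((Metric.ball y (r / 2))ᶜ : Set M)) 1 - dist z y) 0| ≥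
      (min 1 (1 / Metric.infDist y ((Metric.ball y (r / 2))ᶜ : Set M)) - ε) * dist x z :=
  stmt_1_general y r hr hne
end

section
/- Let M be a metric space, let (y_α)_{α∈I} be points and (r_α)_{α∈I} positive radii with r_α ≤ 1 such that the open balls B(y_α, r_α) are pairwise disjoint, and for each α let f_α(x) = max(min(δ_α,1) − ρ(x,y_α), 0) where δ_α = ρ(y_α, M \ B(y_α, r_α/2)). Then for every bounded family of reals v = (v_α)_{α∈I}, the function T(v)(x) = Σ_α v_α f_α(x) (a pointwise well-defined sum since the supports of the f_α are disjoint) is Lipschitz with Lipschitz constant at most 2·sup_α |v_α| and satisfies ‖T(v)‖_∞ ≤ sup_α |v_α|. -/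
theorem stmt_2 {M : Type*} [MetricSpace M] {I : Type*} (y : I → M) (r : I → ℝ)
    (hr0 : ∀ α, 0 < r α) (hr1 : ∀ α, r α ≤ 1)
    (hdisj : Pairwise fun α β => Disjoint (Metric.ball (y α) (r α)) (Metric.ball (y β) (r β)))
    (f : I → M → ℝ)
    (hf : ∀ α x, f α x =
      max (min (Metric.infDist (y α) ((Metric.ball (y α) (r α / 2))ᶜ : Set M)) 1 - dist x (y α)) 0)
    (v : I → ℝ) (hv : BddAbove (Set.range fun α => |v α|)) :
    LipschitzWith (Real.toNNReal (2 * ⨆ α, |v α|)) (fun x : M => ∑' α, v α * f α x) ∧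
      ∀ x : M, |∑' α, v α * f α x| ≤ ⨆ α, |v α| := by
  set C := ⨆ α, |v α| with hCdef
  have hC0 : 0 ≤ C := Real.iSup_nonneg fun α => abs_nonneg _
  have hvC : ∀ α, |v α| ≤ C := fun α => le_ciSup hv α
  have hf0 : ∀ α x, 0 ≤ f α x := fun α x => by rw [hf]; exact le_max_right _ _
  have hf1 : ∀ α x, f α x ≤ 1 := by
    intro α x
    rw [hf]
    refine max_le ?_ zero_le_one
    have h1 : min (Metric.infDist (y α) ((Metric.ball (y α) (r α / 2))ᶜ : Set M)) 1 ≤ 1 :=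
      min_le_right _ _
    have h2 := dist_nonneg (x := x) (y := y α)
    linarith
  have hball : ∀ α x, f α x ≠ 0 → x ∈ Metric.ball (y α) (r α) := by
    intro α x hne
    rw [hf] at hne
    set δ := Metric.infDist (y α) ((Metric.ball (y α) (r α / 2))ᶜ : Set M) with hδ
    have hpos : 0 < min δ 1 - dist x (y α) := by
      by_contra h
      push_neg at h
      exact hne (max_eq_right h)
    have hd : dist x (y α) < δ := lt_of_lt_of_le (by linarith) (min_le_left δ 1)
    have hmem : x ∈ Metric.ball (y α) (r α / 2) := by
      by_contra hx
      have hle : δ ≤ dist (y α) x := Metric.infDist_le_dist_of_mem hx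
      rw [dist_comm] at hle
      linarith
    have := Metric.mem_ball.mp hmem
    exact Metric.mem_ball.mpr (lt_of_lt_of_le this (by linarith [hr0 α]))
  have hD : ∀ α (x x' : M), f α x' = 0 → f α x ≤ dist x x' := by
    intro α x x' h0
    rw [hf] at h0 ⊢
    have hle : min (Metric.infDist (y α) ((Metric.ball (y α) (r α / 2))ᶜ : Set M)) 1
        - dist x' (y α) ≤ 0 := h0 ▸ le_max_left _ 0
    refine max_le ?_ dist_nonneg
    have htri := abs_le.mp (abs_dist_sub_le x x' (y α))
    linarith [htri.1, htri.2]
  have hE : ∀ α (x x' : M), |f α x - f α x'| ≤ dist x x' := by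
    intro α x x'
    rw [hf, hf]
    refine le_trans (abs_max_sub_max_le_abs _ _ _) ?_
    have h1 : min (Metric.infDist (y α) ((Metric.ball (y α) (r α / 2))ᶜ : Set M)) 1 - dist x (y α)
        - (min (Metric.infDist (y α) ((Metric.ball (y α) (r α / 2))ᶜ : Set M)) 1 - dist x' (y α))
        = dist x' (y α) - dist x (y α) := by ring
    rw [h1]
    exact le_trans (abs_dist_sub_le x' x (y α)) (le_of_eq (dist_comm x' x))
  have key : ∀ x : M, ((∑' α, v α * f α x) = 0 ∧ ∀ α, v α * f α x = 0) ∨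
      ∃ β, (∑' α, v α * f α x) = v β * f β x ∧ ∀ α, α ≠ β → v α * f α x = 0 := by
    intro x
    by_cases h : ∃ β, v β * f β x ≠ 0
    · obtain ⟨β, hβ⟩ := h
      have hz : ∀ α, α ≠ β → v α * f α x = 0 := by
        intro α hαβ
        by_contra hα
        have hfα : f α x ≠ 0 := fun h => hα (by rw [h, mul_zero])
        have hfβ : f β x ≠ 0 := fun h => hβ (by rw [h, mul_zero])
        exact (hdisj hαβ).ne_of_mem (hball α x hfα) (hball β x hfβ) rfl
      exact Or.inr ⟨β, tsum_eq_single β hz, hz⟩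
    · push_neg at h
      exact Or.inl ⟨(tsum_congr fun α => h α).trans tsum_zero, h⟩
  have hbound : ∀ x, |∑' α, v α * f α x| ≤ C := by
    intro x
    rcases key x with ⟨h0, _⟩ | ⟨β, hβ, _⟩
    · rw [h0]; simpa using hC0
    · rw [hβ, abs_mul]
      calc |v β| * |f β x| ≤ C * 1 :=
            mul_le_mul (hvC β) (by rw [abs_of_nonneg (hf0 β x)]; exact hf1 β x)
              (abs_nonneg _) hC0
        _ = C := mul_one C
  have hF : ∀ (β) (x x' : M), v β * f β x' = 0 → |v β * f β x| ≤ C * dist x x' := by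
    intro β x x' h0
    rcases mul_eq_zero.mp h0 with hv0 | hfz
    · rw [hv0, zero_mul, abs_zero]
      exact mul_nonneg hC0 dist_nonneg
    · rw [abs_mul, abs_of_nonneg (hf0 β x)]
      exact mul_le_mul (hvC β) (hD β x x' hfz) (hf0 β x) hC0
  refine ⟨LipschitzWith.of_dist_le_mul fun x x' => ?_, hbound⟩
  rw [Real.dist_eq, Real.coe_toNNReal _ (by linarith : (0:ℝ) ≤ 2 * C)]
  have hdnn : 0 ≤ dist x x' := dist_nonneg
  rcases key x with ⟨h0, hz⟩ | ⟨β, hβ, hzβ⟩ <;> rcases key x' with ⟨h0', hz'⟩ | ⟨β', hβ', hzβ'⟩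
  · rw [h0, h0', sub_zero, abs_zero]
    positivity
  · rw [h0, hβ', zero_sub, abs_neg]
    have := hF β' x' x (hz β')
    rw [dist_comm x' x] at this
    nlinarith
  · rw [h0', hβ, sub_zero]
    have := hF β x x' (hz' β)
    nlinarith
  · by_cases hββ' : β = β'
    · subst hββ'
      rw [hβ, hβ', ← mul_sub, abs_mul]
      have h1 : |v β| * |f β x - f β x'| ≤ C * dist x x' :=
        mul_le_mul (hvC β) (hE β x x') (abs_nonneg _) hC0
      nlinarith
    · have h1 := hF β x x' (hzβ' β hββ')
      have h2 := hF β' x' x (hzβ β' (Ne.symm hββ'))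
      rw [dist_comm x' x] at h2
      rw [hβ, hβ']
      calc |v β * f β x - v β' * f β' x'| ≤ |v β * f β x| + |v β' * f β' x'| := abs_sub _ _
        _ ≤ C * dist x x' + C * dist x x' := add_le_add h1 h2
        _ = 2 * C * dist x x' := by ring
end

section
/- Let M be a complete metric space with metric ρ and distinguished base point e. Define on M \ {e} the function ρ†(x,y) = (ρ(x,y) + |ρ(x,e) − ρ(y,e)|) / max(ρ(x,e), ρ(y,e)). Then ρ† is a metric on M \ {e}. -/
private lemma key_tri (a b c p q r : ℝ) (ha : 0 < a) (hb : 0 < b) (hc : 0 < c)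
    (hr1 : r ≤ p + q) (hr2 : r ≤ a + c)
    (h1 : |a - b| ≤ p) (h2 : |b - c| ≤ q) (h3 : |a - c| ≤ r) :
    (r + |a - c|) / max a c ≤ (p + |a - b|) / max a b + (q + |b - c|) / max b c := by
  wlog hac : c ≤ a with H
  · have := H c b a q p r hc hb ha (by linarith) (by linarith)
      (by rwa [abs_sub_comm]) (by rwa [abs_sub_comm]) (by rwa [abs_sub_comm])
      (le_of_not_ge hac)
    rw [max_comm a c, abs_sub_comm a c, max_comm a b, abs_sub_comm a b,
      max_comm b c, abs_sub_comm b c]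
    linarith
  rw [max_eq_left hac, abs_of_nonneg (by linarith : (0:ℝ) ≤ a - c)]
  have hp0 : 0 ≤ p := le_trans (abs_nonneg _) h1
  have hq0 : 0 ≤ q := le_trans (abs_nonneg _) h2
  rcases le_total a b with hab | hab
  · -- c ≤ a ≤ b
    rw [max_eq_right hab, abs_of_nonpos (by linarith : a - b ≤ 0),
      max_eq_left (le_trans hac hab), abs_of_nonneg (by linarith : (0:ℝ) ≤ b - c)]
    rw [div_add_div _ _ hb.ne' hb.ne', div_le_div_iff₀ ha (by positivity)]
    rcases le_total (p + q) (a + c) with hs | hs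
    · nlinarith [mul_nonneg (sub_nonneg.2 hab) (sub_nonneg.2 hs), mul_pos ha hb]
    · nlinarith [mul_pos ha hb, mul_nonneg (sub_nonneg.2 hs) ha.le, mul_pos hb hb]
  · rw [max_eq_left hab, abs_of_nonneg (by linarith : (0:ℝ) ≤ a - b)]
    rcases le_total b c with hbc | hbc
    · -- b ≤ c ≤ a
      rw [max_eq_right hbc, abs_of_nonpos (by linarith : b - c ≤ 0)]
      rw [div_add_div _ _ ha.ne' hc.ne', div_le_div_iff₀ ha (by positivity)]
      nlinarith [mul_nonneg (sub_nonneg.2 hac) (by nlinarith : (0:ℝ) ≤ q + c - b),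
        mul_pos ha hc]
    · -- c ≤ b ≤ a
      rw [max_eq_left hbc, abs_of_nonneg (by linarith : (0:ℝ) ≤ b - c)]
      rw [div_add_div _ _ ha.ne' hb.ne', div_le_div_iff₀ ha (by positivity)]
      nlinarith [mul_nonneg (sub_nonneg.2 hab) (by nlinarith : (0:ℝ) ≤ q + b - c),
        mul_pos ha hb]

theorem stmt_3 {M : Type*} [MetricSpace M] (e : M)
    (d : M → M → ℝ)
    (hd : ∀ x y : M, d x y = (dist x y + |dist x e - dist y e|) / max (dist x e) (dist y e)) :
    (∀ x y : M, x ≠ e → y ≠ e → (d x y = 0 ↔ x = y)) ∧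
    (∀ x y : M, x ≠ e → y ≠ e → d x y = d y x) ∧
    (∀ x y : M, x ≠ e → y ≠ e → 0 ≤ d x y) ∧
    (∀ x y z : M, x ≠ e → y ≠ e → z ≠ e → d x z ≤ d x y + d y z) := by
  refine ⟨?_, ?_, ?_, ?_⟩
  · intro x y hx hy
    have hax : 0 < dist x e := dist_pos.2 hx
    have hmax : 0 < max (dist x e) (dist y e) := lt_max_of_lt_left hax
    rw [hd]
    constructor
    · intro h
      have hnum : dist x y + |dist x e - dist y e| = 0 := by
        field_simp at h
        linarith [h]
      have : dist x y = 0 := by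
        have := abs_nonneg (dist x e - dist y e)
        have := dist_nonneg (x := x) (y := y)
        linarith
      exact dist_eq_zero.1 this
    · rintro rfl
      simp
  · intro x y _ _
    rw [hd, hd, dist_comm x y, abs_sub_comm, max_comm]
  · intro x y _ _
    rw [hd]
    positivity
  · intro x y z hx hy hz
    rw [hd, hd, hd]
    exact key_tri (dist x e) (dist y e) (dist z e) (dist x y) (dist y z) (dist x z)
      (dist_pos.2 hx) (dist_pos.2 hy) (dist_pos.2 hz)
      (dist_triangle x y z)
      (by have := dist_triangle x e z; rw [dist_comm e z] at this; linarith)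
      (abs_dist_sub_le x y e) (abs_dist_sub_le y z e) (abs_dist_sub_le x z e)
end

section
/- Let M be a metric space with metric ρ and base point e, and let ρ†(x,y) = (ρ(x,y) + |ρ(x,e) − ρ(y,e)|) / max(ρ(x,e), ρ(y,e)) on M \ {e}. Then the identity mapping from (M \ {e}, ρ†) to (M \ {e}, ρ) is a homeomorphism; in particular, for any sequence (x_n) and point x in M \ {e}, ρ†(x_n, x) → 0 if and only if ρ(x_n, x) → 0. -/
/-!
Write `a = ρ(y, e)`, `b = ρ(x, e)` and `t = ρ†(x, y)`. Since `|b - a| ≤ ρ(x, y)` and the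
denominator is at least `a`, we get `t ≤ 2 ρ(x, y) / a`. Conversely `t · max(a, b) = ρ(x, y) + |b - a|`
gives `ρ(x, y) ≤ a t` as soon as `t ≤ 1`. So near a fixed point `y ≠ e` the two metrics are
comparable, and they have the same convergent sequences.
-/

open Filter

section

variable {M : Type*} [MetricSpace M]

noncomputable def daggerDist (e x y : M) : ℝ :=
  (dist x y + |dist x e - dist y e|) / max (dist x e) (dist y e)

lemma daggerDist_nonneg (e x y : M) : 0 ≤ daggerDist e x y :=
  div_nonneg (by positivity) (le_max_of_le_left dist_nonneg)

lemma daggerDist_le_two_mul_dist_div {e y : M} (x : M) (hy : y ≠ e) :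
    daggerDist e x y ≤ 2 * dist x y / dist y e := by
  have hye : 0 < dist y e := dist_pos.mpr hy
  unfold daggerDist
  calc (dist x y + |dist x e - dist y e|) / max (dist x e) (dist y e)
      ≤ (2 * dist x y) / max (dist x e) (dist y e) := by
        gcongr
        linarith [abs_dist_sub_le x y e]
    _ ≤ 2 * dist x y / dist y e := by
        gcongr
        exact le_max_right _ _

lemma dist_le_mul_daggerDist {e y : M} (x : M) (hy : y ≠ e) (h : daggerDist e x y ≤ 1) :
    dist x y ≤ dist y e * daggerDist e x y := by
  have hmax : 0 < max (dist x e) (dist y e) := lt_max_of_lt_right (dist_pos.mpr hy)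
  have hmul : daggerDist e x y * max (dist x e) (dist y e) =
      dist x y + |dist x e - dist y e| := div_mul_cancel₀ _ hmax.ne'
  rcases le_total (dist x e) (dist y e) with hle | hle
  · rw [max_eq_right hle] at hmul
    linarith [abs_nonneg (dist x e - dist y e)]
  · -- here `t b = ρ + (b - a)`, so `a t - ρ = (1 - t)(b - a) ≥ 0`
    rw [max_eq_left hle, abs_of_nonneg (sub_nonneg.mpr hle)] at hmul
    nlinarith [mul_nonneg (sub_nonneg.mpr h) (sub_nonneg.mpr hle)]

theorem tendsto_daggerDist_zero_iff {e x : M} (xs : ℕ → M) (hx : x ≠ e) :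
    Tendsto (fun n => daggerDist e (xs n) x) atTop (nhds 0) ↔
      Tendsto (fun n => dist (xs n) x) atTop (nhds 0) := by
  constructor
  · intro h
    have hsmall : ∀ᶠ n in atTop, daggerDist e (xs n) x ≤ 1 :=
      h.eventually (eventually_le_nhds one_pos)
    refine squeeze_zero' (Eventually.of_forall fun n => dist_nonneg)
      (hsmall.mono fun n hn => dist_le_mul_daggerDist (xs n) hx hn) ?_
    simpa using h.const_mul (dist x e)
  · intro h
    refine squeeze_zero (fun n => daggerDist_nonneg e (xs n) x)
      (fun n => daggerDist_le_two_mul_dist_div (xs n) hx) ?_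
    simpa using (h.const_mul 2).div_const (dist x e)

end

theorem stmt_4 {M : Type*} [MetricSpace M] (e : M)
    (d : M → M → ℝ)
    (hd : ∀ x y : M, d x y = (dist x y + |dist x e - dist y e|) / max (dist x e) (dist y e)) :
    ∀ (xs : ℕ → M) (x : M), (∀ n, xs n ≠ e) → x ≠ e →
      (Tendsto (fun n => d (xs n) x) atTop (nhds 0) ↔
        Tendsto (fun n => dist (xs n) x) atTop (nhds 0)) := by
  intro xs x _ hx
  obtain rfl : d = daggerDist e := funext₂ hd
  exact tendsto_daggerDist_zero_iff xs hx
end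

section
/- Let M be a metric space with base point e. The space lip₀(M) of Lipschitz functions vanishing at e is dense, with respect to the topology of pointwise convergence, in the space C_e(M) = {f ∈ C(M) : f(e) = 0} of continuous functions vanishing at e. -/
/-!
A neighbourhood of `g` in the topology of pointwise convergence only constrains the values of
`g` on a finite set `I`. Any function is Lipschitz on the finite set `I ∪ {e}`, whose distinct
points are at distance bounded below, and McShane's extension turns it into a Lipschitz function
on `M` that agrees with `g` on `I` and vanishes at `e`.
-/

theorem Finset.exists_lipschitzOnWith {α β : Type*} [MetricSpace α] [PseudoMetricSpace β]
    (s : Finset α) (f : α → β) : ∃ K, LipschitzOnWith K f s := by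
  let ratio : α × α → NNReal := fun p => nndist (f p.1) (f p.2) / nndist p.1 p.2
  refine ⟨(s ×ˢ s).sup ratio, LipschitzOnWith.of_dist_le_mul fun x hx y hy => ?_⟩
  rcases eq_or_ne x y with rfl | hxy
  · simp
  have hpos : 0 < nndist x y := pos_iff_ne_zero.2 (nndist_eq_zero.not.2 hxy)
  have hle : ratio (x, y) ≤ (s ×ˢ s).sup ratio := Finset.le_sup (Finset.mk_mem_product hx hy)
  rw [dist_nndist, dist_nndist]
  exact_mod_cast (div_le_iff₀ hpos).1 hle

theorem mem_closure_of_forall_finset_exists_eq {ι : Type*} {X : ι → Type*}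
    [∀ i, TopologicalSpace (X i)] {S : Set (∀ i, X i)} {g : ∀ i, X i}
    (h : ∀ I : Finset ι, ∃ f ∈ S, ∀ i ∈ I, f i = g i) : g ∈ closure S := by
  refine mem_closure_iff.2 fun U hU hgU => ?_
  obtain ⟨I, u, hu, hIU⟩ := isOpen_pi_iff.1 hU g hgU
  obtain ⟨f, hfS, hfg⟩ := h I
  exact ⟨f, hIU fun i hi => hfg i hi ▸ (hu i hi).2, hfS⟩

theorem stmt_9 {M : Type*} [MetricSpace M] (e : M) :
    ∀ g : M → ℝ, Continuous g → g e = 0 →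
      g ∈ closure {f : M → ℝ | (∃ K : NNReal, LipschitzWith K f) ∧ f e = 0} := by
  classical
  intro g _ hg0
  refine mem_closure_of_forall_finset_exists_eq fun I => ?_
  obtain ⟨K, hK⟩ := (insert e I).exists_lipschitzOnWith g
  obtain ⟨f, hf, hgf⟩ := hK.extend_real
  have hfI : ∀ i ∈ I, f i = g i := fun i hi => (hgf (by simp [hi])).symm
  exact ⟨f, ⟨⟨K, hf⟩, (hgf (by simp)).symm.trans hg0⟩, hfI⟩
end

section
/- Let M be an infinite metric space with base point e. Then lip₀(M), as a subset of C_e(M) = {f ∈ C(M) : f(e)=0}, is not closed in the topology of pointwise convergence; equivalently, there exists a continuous function f on M with f(e)=0 that is not Lipschitz but is a pointwise limit of a net (or filter) of Lipschitz functions vanishing at e. -/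
/-!
Density: a pointwise neighbourhood of `f` only constrains finitely many values, and on a finite
set `f` is Lipschitz, so McShane's extension of `f` restricted to that finite set (together with
`e`) is a Lipschitz function vanishing at `e` in the neighbourhood. Hence `lip₀(M)` is dense, and
it remains to find a continuous non-Lipschitz `f` with `f e = 0`. If `M` has an accumulation
point `a`, take `√(dist x a)` shifted to vanish at `e`. Otherwise `M` is discrete, every function
is continuous, and any function with unbounded difference quotients against `e` will do.
-/

open Set Metric NNReal

section

variable {M : Type*} [MetricSpace M]

theorem Set.Finite.exists_lipschitzOnWith {s : Set M} (hs : s.Finite) (f : M → ℝ) :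
    ∃ K : ℝ≥0, LipschitzOnWith K f s := by
  obtain ⟨C, hC⟩ :=
    ((hs.prod hs).image fun p : M × M => dist (f p.1) (f p.2) / dist p.1 p.2).bddAbove
  refine ⟨C.toNNReal, LipschitzOnWith.of_dist_le_mul fun x hx y hy => ?_⟩
  rcases eq_or_ne x y with rfl | hxy
  · simp
  have hd : 0 < dist x y := dist_pos.2 hxy
  have hratio : dist (f x) (f y) / dist x y ≤ C.toNNReal :=
    (hC ⟨(x, y), ⟨hx, hy⟩, rfl⟩).trans (Real.le_coe_toNNReal C)
  rwa [div_le_iff₀ hd] at hratio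

theorem mem_closure_setOf_lipschitzWith_of_apply_eq_zero {e : M} {f : M → ℝ} (hf : f e = 0) :
    f ∈ closure {g : M → ℝ | (∃ K : ℝ≥0, LipschitzWith K g) ∧ g e = 0} := by
  rw [mem_closure_iff_nhds]
  intro U hU
  rw [nhds_pi] at hU
  obtain ⟨I, hI, t, ht, hIU⟩ := Filter.mem_pi.1 hU
  obtain ⟨K, hK⟩ := (hI.insert e).exists_lipschitzOnWith f
  obtain ⟨g, hg, hgf⟩ := hK.extend_real
  refine ⟨g, hIU fun i hi => ?_, ⟨K, hg⟩, ?_⟩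
  · rw [← hgf (mem_insert_of_mem _ hi)]
    exact mem_of_mem_nhds (ht i)
  · rw [← hgf (mem_insert e I), hf]

theorem not_lipschitzWith_sqrt_dist_sub {a : M} (ha : ¬IsOpen ({a} : Set M)) (c : ℝ)
    (K : ℝ≥0) : ¬LipschitzWith K fun x => √(dist x a) - c := by
  intro hK
  rw [isOpen_singleton_iff] at ha
  push Not at ha
  obtain ⟨x, hxa, hne⟩ := ha (1 / ((K : ℝ) + 1) ^ 2) (by positivity)
  have hs : 0 < √(dist x a) := Real.sqrt_pos.2 (dist_pos.2 hne)
  have hsq : √(dist x a) ^ 2 = dist x a := Real.sq_sqrt dist_nonneg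
  have hle : √(dist x a) ≤ K * √(dist x a) ^ 2 := by
    simpa [hsq, Real.dist_eq, abs_of_pos hs] using hK.dist_le_mul x a
  have hsmall : ((K : ℝ) + 1) * √(dist x a) < 1 := by
    rw [← hsq, lt_div_iff₀ (by positivity)] at hxa
    nlinarith [K.coe_nonneg]
  nlinarith [K.coe_nonneg]

theorem exists_not_lipschitzWith_of_infinite [Infinite M] (e : M) :
    ∃ f : M → ℝ, f e = 0 ∧ ¬∃ K : ℝ≥0, LipschitzWith K f := by
  let v : ℕ ↪ ({e}ᶜ : Set M) := (finite_singleton e).infinite_compl.natEmbedding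
  have hv : Function.Injective fun n => (v n : M) := Subtype.val_injective.comp v.injective
  let f : M → ℝ := Function.extend (fun n => (v n : M)) (fun n => n * dist (v n : M) e) 0
  have hfe : f e = 0 := Function.extend_apply' _ _ _ fun ⟨n, hn⟩ => (v n).2 hn
  refine ⟨f, hfe, fun ⟨K, hK⟩ => ?_⟩
  set n := ⌈(K : ℝ)⌉₊ + 1
  have hd : 0 < dist (v n : M) e := dist_pos.2 (v n).2
  have hfv : f (v n) = n * dist (v n : M) e := hv.extend_apply _ _ n
  have hle : n * dist (v n : M) e ≤ K * dist (v n : M) e := by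
    have := hK.dist_le_mul (v n) e
    rwa [hfe, hfv, Real.dist_eq, sub_zero, abs_of_nonneg (by positivity)] at this
  have hKn : (K : ℝ) < n := by
    push_cast [n]
    linarith [Nat.le_ceil (K : ℝ)]
  nlinarith

theorem exists_continuous_not_lipschitzWith [Infinite M] (e : M) :
    ∃ f : M → ℝ, Continuous f ∧ f e = 0 ∧ ¬∃ K : ℝ≥0, LipschitzWith K f := by
  by_cases hdisc : ∀ a : M, IsOpen ({a} : Set M)
  · have : DiscreteTopology M := discreteTopology_iff_isOpen_singleton.2 hdisc
    obtain ⟨f, hfe, hf⟩ := exists_not_lipschitzWith_of_infinite e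
    exact ⟨f, continuous_of_discreteTopology, hfe, hf⟩
  push Not at hdisc
  obtain ⟨a, ha⟩ := hdisc
  exact ⟨fun x => √(dist x a) - √(dist e a), by fun_prop, sub_self _,
    fun ⟨K, hK⟩ => not_lipschitzWith_sqrt_dist_sub ha _ K hK⟩

end

theorem stmt_10 {M : Type*} [MetricSpace M] [Infinite M] (e : M) :
    ∃ f : M → ℝ, Continuous f ∧ f e = 0 ∧ (¬ ∃ K : NNReal, LipschitzWith K f) ∧
      f ∈ closure {g : M → ℝ | (∃ K : NNReal, LipschitzWith K g) ∧ g e = 0} := by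
  obtain ⟨f, hf, hfe, hnot⟩ := exists_continuous_not_lipschitzWith e
  exact ⟨f, hf, hfe, hnot, mem_closure_setOf_lipschitzWith_of_apply_eq_zero hfe⟩
end

section
/- Every infinite metric space admits a continuous real-valued function that is not Lipschitz. -/
/-!
If some point `x` is not isolated, `y ↦ √(dist y x)` is continuous but not Lipschitz, since
`√d / d` is unbounded as `d → 0⁺`. Otherwise the space is discrete, so every function is
continuous, and along an injective sequence `eₙ` the values `n · dist eₙ e₀` force any
Lipschitz constant to exceed every `n`.
-/

open Metric

theorem not_lipschitzWith_sqrt_dist {M : Type*} [MetricSpace M] {x : M} (hx : ¬IsOpen {x})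
    (K : NNReal) : ¬LipschitzWith K fun y => √(dist y x) := by
  intro hK
  rw [isOpen_singleton_iff] at hx
  push Not at hx
  obtain ⟨y, hyx_lt, hyx⟩ := hx (1 / (K + 1) ^ 2) (by positivity)
  have hd : 0 < √(dist y x) := Real.sqrt_pos.mpr (dist_pos.mpr hyx)
  have hsmall : √(dist y x) < 1 / (K + 1) := by
    calc √(dist y x) < √(1 / (K + 1) ^ 2) := Real.sqrt_lt_sqrt dist_nonneg hyx_lt
      _ = 1 / (K + 1) := by rw [Real.sqrt_div' _ (by positivity), Real.sqrt_one,
          Real.sqrt_sq (by positivity)]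
  have hlip : √(dist y x) ≤ K * (√(dist y x) * √(dist y x)) := by
    simpa [Real.dist_eq, Real.mul_self_sqrt dist_nonneg, abs_of_nonneg (Real.sqrt_nonneg _)] using
      hK.dist_le_mul y x
  have hlarge : 1 ≤ K * √(dist y x) := by
    rw [← mul_assoc] at hlip
    exact (le_mul_iff_one_le_left hd).mp hlip
  rw [lt_div_iff₀ (by positivity)] at hsmall
  linarith

theorem exists_not_lipschitzWith {M : Type*} [MetricSpace M] [Infinite M] :
    ∃ f : M → ℝ, ¬∃ K : NNReal, LipschitzWith K f := by
  let e := Infinite.natEmbedding M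
  refine ⟨Function.extend e (fun n => n * dist (e n) (e 0)) 0, ?_⟩
  rintro ⟨K, hK⟩
  obtain ⟨n, hn⟩ := exists_nat_gt (K : ℝ)
  have hpos : 0 < dist (e (n + 1)) (e 0) := dist_pos.mpr (e.injective.ne n.succ_ne_zero)
  have hlip := hK.dist_le_mul (e (n + 1)) (e 0)
  rw [Real.dist_eq, e.injective.extend_apply, e.injective.extend_apply, Nat.cast_zero, zero_mul,
    sub_zero, abs_of_nonneg (by positivity)] at hlip
  have : (n + 1 : ℝ) ≤ K := le_of_mul_le_mul_right (by exact_mod_cast hlip) hpos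
  linarith

theorem stmt_11 {M : Type*} [MetricSpace M] [Infinite M] :
    ∃ f : M → ℝ, Continuous f ∧ ¬ ∃ K : NNReal, LipschitzWith K f := by
  by_cases hM : DiscreteTopology M
  · obtain ⟨f, hf⟩ := exists_not_lipschitzWith (M := M)
    exact ⟨f, continuous_of_discreteTopology, hf⟩
  · obtain ⟨x, hx⟩ : ∃ x : M, ¬IsOpen {x} := by
      simpa [discreteTopology_iff_isOpen_singleton] using hM
    exact ⟨fun y => √(dist y x), (continuous_id.dist continuous_const).sqrt,
      fun ⟨K, hK⟩ => not_lipschitzWith_sqrt_dist hx K hK⟩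
end

section
/- A Banach space E has the Schur property if and only if E (with the norm topology) and E with the weak topology are sequentially homeomorphic, i.e., there exists a bijection T : E → E_w such that both T and T⁻¹ map convergent sequences to convergent sequences. -/
/-!
If `E` has the Schur property, the identity map is the required bijection. Conversely, assume
`T : E ≃ E` exchanges norm and weak sequential convergence. Norm convergence in a metric space
admits diagonal sequences: if `f p m → g p` as `m → ∞` and `g p → L`, then `f p (m p) → L` for
a suitable `m`. Weak sequential convergence in a space without the Schur property does not: a
weakly null sequence `u` of unit vectors gives `u p + (p + 1) • u m → u p` weakly as `m → ∞`
and `u p → 0` weakly, while every diagonal sequence `u p + (p + 1) • u (m p)` is unbounded and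
so, by Banach–Steinhaus, not weakly convergent. Transporting the norm diagonal through `T`
produces such a weakly convergent diagonal sequence, a contradiction.
-/

open Filter Topology

/-- A sequence converges weakly to a limit. -/
def WeaklyConvergentSeq {E : Type*} [NormedAddCommGroup E] [NormedSpace ℝ E]
    (x : ℕ → E) (l : E) : Prop :=
  ∀ φ : E →L[ℝ] ℝ, Tendsto (fun n => φ (x n)) atTop (nhds (φ l))

theorem Metric.exists_tendsto_diag {X : Type*} [PseudoMetricSpace X] {f : ℕ → ℕ → X}
    {g : ℕ → X} {L : X} (hf : ∀ p, Tendsto (f p) atTop (𝓝 (g p)))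
    (hg : Tendsto g atTop (𝓝 L)) :
    ∃ m : ℕ → ℕ, Tendsto (fun p => f p (m p)) atTop (𝓝 L) := by
  have hclose : ∀ p : ℕ, ∃ m, dist (g p) (f p m) < 1 / ((p : ℝ) + 1) := fun p =>
    ((Metric.tendsto_atTop.1 (hf p) _ Nat.one_div_pos_of_nat).imp
      fun _ hm => by simpa [dist_comm] using hm _ le_rfl)
  choose m hm using hclose
  refine ⟨m, hg.congr_dist ?_⟩
  exact squeeze_zero (fun _ => dist_nonneg) (fun p => (hm p).le)
    tendsto_one_div_add_atTop_nhds_zero_nat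

namespace WeaklyConvergentSeq

variable {E : Type*} [NormedAddCommGroup E] [NormedSpace ℝ E] {x : ℕ → E} {l : E}

theorem of_tendsto (h : Tendsto x atTop (𝓝 l)) : WeaklyConvergentSeq x l :=
  fun φ => (φ.continuous.tendsto l).comp h

theorem comp_tendsto (h : WeaklyConvergentSeq x l) {n : ℕ → ℕ}
    (hn : Tendsto n atTop atTop) : WeaklyConvergentSeq (x ∘ n) l :=
  fun φ => (h φ).comp hn

theorem sub_const (h : WeaklyConvergentSeq x l) : WeaklyConvergentSeq (fun k => x k - l) 0 :=
  fun φ => by simpa using (h φ).sub_const (φ l)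

theorem smul_of_isBoundedUnder (h : WeaklyConvergentSeq x 0) {c : ℕ → ℝ}
    (hc : IsBoundedUnder (· ≤ ·) atTop (norm ∘ c)) :
    WeaklyConvergentSeq (fun k => c k • x k) 0 :=
  fun φ => by simpa using isBoundedUnder_le_mul_tendsto_zero hc (by simpa using h φ)

theorem const_add_smul (h : WeaklyConvergentSeq x 0) (v : E) (c : ℝ) :
    WeaklyConvergentSeq (fun k => v + c • x k) v :=
  fun φ => by simpa using ((h φ).const_mul c).const_add (φ v)

theorem exists_norm_le (h : WeaklyConvergentSeq x l) : ∃ C, ∀ n, ‖x n‖ ≤ C := by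
  have hpointwise : ∀ φ : E →L[ℝ] ℝ, ∃ C, ∀ n, ‖φ (x n)‖ ≤ C := fun φ => by
    obtain ⟨C, hC⟩ := (h φ).norm.bddAbove_range
    exact ⟨C, fun n => hC ⟨n, rfl⟩⟩
  obtain ⟨C, hC⟩ :=
    banach_steinhaus (g := fun n => NormedSpace.inclusionInDoubleDual ℝ E (x n)) hpointwise
  exact ⟨C, fun n => ((NormedSpace.inclusionInDoubleDualLi ℝ).norm_map (x n)).symm.trans_le (hC n)⟩

end WeaklyConvergentSeq

section

variable {E : Type*} [NormedAddCommGroup E] [NormedSpace ℝ E]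

theorem exists_norm_one_weaklyConvergentSeq_zero {x : ℕ → E} {l : E}
    (hx : WeaklyConvergentSeq x l) (hnx : ¬ Tendsto x atTop (𝓝 l)) :
    ∃ u : ℕ → E, (∀ k, ‖u k‖ = 1) ∧ WeaklyConvergentSeq u 0 := by
  obtain ⟨ε, hε, hfar⟩ : ∃ ε > 0, ∃ᶠ n in atTop, ε ≤ ‖x n - l‖ := by
    simpa [Metric.tendsto_atTop, dist_eq_norm, frequently_atTop] using hnx
  obtain ⟨n, hn, hεn⟩ := extraction_of_frequently_atTop hfar
  have hne : ∀ k, x (n k) - l ≠ 0 := fun k => norm_pos_iff.1 (hε.trans_le (hεn k))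
  refine ⟨fun k => ‖x (n k) - l‖⁻¹ • (x (n k) - l), fun k => norm_smul_inv_norm (hne k), ?_⟩
  refine ((hx.comp_tendsto hn.tendsto_atTop).sub_const).smul_of_isBoundedUnder ?_
  refine isBoundedUnder_of ⟨ε⁻¹, fun k => ?_⟩
  simpa using inv_anti₀ hε (hεn k)

theorem not_weaklyConvergentSeq_add_nat_smul {u : ℕ → E} (hu : ∀ k, ‖u k‖ = 1)
    (m : ℕ → ℕ) (L : E) :
    ¬ WeaklyConvergentSeq (fun p => u p + ((p : ℝ) + 1) • u (m p)) L := by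
  intro h
  obtain ⟨C, hC⟩ := h.exists_norm_le
  obtain ⟨p, hp⟩ := exists_nat_gt C
  have hlarge : (p : ℝ) + 1 ≤ ‖u p + ((p : ℝ) + 1) • u (m p)‖ + ‖u p‖ := by
    calc (p : ℝ) + 1 = ‖((p : ℝ) + 1) • u (m p)‖ := by
          rw [norm_smul, hu, Real.norm_of_nonneg (by positivity), mul_one]
      _ = ‖(u p + ((p : ℝ) + 1) • u (m p)) - u p‖ := by rw [add_sub_cancel_left]
      _ ≤ _ := norm_sub_le _ _
  linarith [hC p, hu p]

end

theorem stmt_13_general {E : Type*} [NormedAddCommGroup E] [NormedSpace ℝ E] :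
    (∀ (x : ℕ → E) (l : E), WeaklyConvergentSeq x l → Tendsto x atTop (nhds l)) ↔
    ∃ T : E ≃ E,
      (∀ (x : ℕ → E) (l : E), Tendsto x atTop (nhds l) →
        WeaklyConvergentSeq (fun n => T (x n)) (T l)) ∧
      (∀ (x : ℕ → E) (l : E), WeaklyConvergentSeq x l →
        Tendsto (fun n => T.symm (x n)) atTop (nhds (T.symm l))) := by
  constructor
  · exact fun hSchur => ⟨Equiv.refl E, fun _ _ => .of_tendsto, hSchur⟩
  · rintro ⟨T, hT, hTsymm⟩ x l hx
    by_contra hnx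
    obtain ⟨u, hu_norm, hu⟩ := exists_norm_one_weaklyConvergentSeq_zero hx hnx
    have hrow : ∀ p : ℕ, Tendsto (fun m => T.symm (u p + ((p : ℝ) + 1) • u m)) atTop
        (𝓝 (T.symm (u p))) := fun p => hTsymm _ _ (hu.const_add_smul (u p) _)
    obtain ⟨m, hm⟩ := Metric.exists_tendsto_diag hrow (hTsymm u 0 hu)
    exact not_weaklyConvergentSeq_add_nat_smul hu_norm m 0 (by simpa using hT _ _ hm)

theorem stmt_13 {E : Type*} [NormedAddCommGroup E] [NormedSpace ℝ E] [CompleteSpace E] :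
    (∀ (x : ℕ → E) (l : E), WeaklyConvergentSeq x l → Tendsto x atTop (nhds l)) ↔
    ∃ T : E ≃ E,
      (∀ (x : ℕ → E) (l : E), Tendsto x atTop (nhds l) →
        WeaklyConvergentSeq (fun n => T (x n)) (T l)) ∧
      (∀ (x : ℕ → E) (l : E), WeaklyConvergentSeq x l →
        Tendsto (fun n => T.symm (x n)) atTop (nhds (T.symm l))) :=
  stmt_13_general
end

section
/- Let E be a Banach space. Then the norm density of E equals the sequential density of E with the weak topology: d(E) = d_seq(E_w). In particular, if E and F are Banach spaces such that E_w and F_w are sequentially homeomorphic, then d(E) = d(F). -/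
open Filter Cardinal

/-- The (norm) density character of a Banach space. -/
noncomputable def normDensity (E : Type*) [NormedAddCommGroup E] [NormedSpace ℝ E] : Cardinal :=
  sInf {c : Cardinal | ∃ A : Set E, #A = c ∧ Dense A}

/-- The sequential density of a Banach space with its weak topology. -/
noncomputable def weakSeqDensity (E : Type*) [NormedAddCommGroup E] [NormedSpace ℝ E] : Cardinal :=
  sInf {c : Cardinal | ∃ A : Set E, #A = c ∧
    ∀ x : E, ∃ s : ℕ → E, (∀ n, s n ∈ A) ∧ WeaklyConvergentSeq s x}

section Aux

variable {E : Type u} [NormedAddCommGroup E] [NormedSpace ℝ E]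

lemma weakSet_nonempty :
    {c : Cardinal | ∃ A : Set E, #A = c ∧
      ∀ x : E, ∃ s : ℕ → E, (∀ n, s n ∈ A) ∧ WeaklyConvergentSeq s x}.Nonempty :=
  ⟨#(Set.univ : Set E), Set.univ, rfl, fun x =>
    ⟨fun _ => x, fun _ => Set.mem_univ x, fun _ => tendsto_const_nhds⟩⟩

lemma normDensity_le_of_weak (A : Set E)
    (hA : ∀ x : E, ∃ s : ℕ → E, (∀ n, s n ∈ A) ∧ WeaklyConvergentSeq s x) :
    normDensity E ≤ #A := by
  rcases Set.finite_or_infinite A with hfin | hinf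
  ·
    have hEA : ∀ x : E, x ∈ A := by
      intro x
      obtain ⟨s, hs, hw⟩ := hA x
      haveI : Finite ↥A := hfin
      obtain ⟨a, ha⟩ := Finite.exists_infinite_fiber (fun n => (⟨s n, hs n⟩ : A))
      have hinf' : {n | s n = (a : E)}.Infinite := by
        refine Set.Infinite.mono ?_ (Set.infinite_coe_iff.mp ha)
        intro n hn
        simpa using congrArg Subtype.val hn
      have hfreq : ∃ᶠ n in atTop, s n = (a : E) :=
        Nat.frequently_atTop_iff_infinite.mpr hinf'
      have hx : ∀ φ : E →L[ℝ] ℝ, φ x = φ (a : E) := by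
        intro φ
        exact tendsto_nhds_unique_of_frequently_eq (hw φ) tendsto_const_nhds
          (hfreq.mono fun n hn => by rw [hn])
      have : x = (a : E) := by
        by_contra hne
        obtain ⟨f, hf⟩ := geometric_hahn_banach_point_point hne
        rw [hx f] at hf
        exact lt_irrefl _ hf
      rw [this]; exact a.2
    have hdense : Dense A := by
      have : A = Set.univ := Set.eq_univ_of_forall hEA
      rw [this]; exact dense_univ
    exact csInf_le' ⟨A, rfl, hdense⟩
  · haveI : Infinite ↥A := hinf.to_subtype
    set g : List (↥A × ℚ) → E := fun l => (l.map fun p => (p.2 : ℝ) • (p.1 : E)).sum with hg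
    set D : Set E := Set.range g with hD
    have hDadd : ∀ x ∈ D, ∀ y ∈ D, x + y ∈ D := by
      rintro _ ⟨l₁, rfl⟩ _ ⟨l₂, rfl⟩
      exact ⟨l₁ ++ l₂, by simp [hg]⟩
    have hDsmul : ∀ (q : ℚ), ∀ x ∈ D, (q : ℝ) • x ∈ D := by
      rintro q _ ⟨l, rfl⟩
      refine ⟨l.map fun p => (p.1, q * p.2), ?_⟩
      simp only [hg, List.map_map, Function.comp]
      rw [List.smul_sum, List.map_map]
      refine congrArg List.sum (congrFun (congrArg List.map ?_) l)
      funext p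
      simp only [Function.comp_apply]
      push_cast
      rw [mul_smul]
    have hAD : A ⊆ D := by
      intro a ha
      exact ⟨[(⟨a, ha⟩, 1)], by simp [hg]⟩
    -- closure D is closed under addition and real scalar multiplication
    have hCadd : ∀ x ∈ closure D, ∀ y ∈ closure D, x + y ∈ closure D := by
      intro x hx y hy
      obtain ⟨u, hu, hul⟩ := mem_closure_iff_seq_limit.mp hx
      obtain ⟨v, hv, hvl⟩ := mem_closure_iff_seq_limit.mp hy
      exact mem_closure_iff_seq_limit.mpr
        ⟨fun n => u n + v n, fun n => hDadd _ (hu n) _ (hv n), hul.add hvl⟩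
    have hCsmul : ∀ (r : ℝ), ∀ x ∈ closure D, r • x ∈ closure D := by
      intro r x hx
      obtain ⟨u, hu, hul⟩ := mem_closure_iff_seq_limit.mp hx
      have hr : r ∈ closure (Set.range ((↑) : ℚ → ℝ)) := Rat.denseRange_cast r
      obtain ⟨t, ht, htl⟩ := mem_closure_iff_seq_limit.mp hr
      choose q hq using ht
      refine mem_closure_iff_seq_limit.mpr
        ⟨fun n => (q n : ℝ) • u n, fun n => hDsmul _ _ (hu n), ?_⟩
      have hql : Tendsto (fun n => (q n : ℝ)) atTop (nhds r) := by
        convert htl using 1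
        funext n; exact hq n
      exact hql.smul hul
    have hCconv : Convex ℝ (closure D) := by
      intro x hx y hy s t hs ht hst
      exact hCadd _ (hCsmul s x hx) _ (hCsmul t y hy)
    have hdense : Dense D := by
      intro x
      by_contra hx
      obtain ⟨f, u, hfu, hux⟩ := geometric_hahn_banach_closed_point hCconv isClosed_closure hx
      obtain ⟨s, hs, hw⟩ := hA x
      have h2 : ∀ᶠ n in atTop, u < f (s n) := (hw f).eventually (eventually_gt_nhds hux)
      obtain ⟨n, hn⟩ := h2.exists
      exact absurd (hfu _ (subset_closure (hAD (hs n)))) (not_lt.2 hn.le)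
    have hcard : #D ≤ #A := by
      calc #D ≤ #(List (↥A × ℚ)) := Cardinal.mk_range_le
        _ = max #(↥A × ℚ) ℵ₀ := Cardinal.mk_list_eq_max_mk_aleph0 _
        _ = #A := by
            rw [Cardinal.mk_prod, Cardinal.mkRat, Cardinal.lift_aleph0, Cardinal.lift_uzero,
              Cardinal.mul_aleph0_eq (Cardinal.aleph0_le_mk ↥A),
              max_eq_left (Cardinal.aleph0_le_mk ↥A)]
    exact le_trans (csInf_le' ⟨D, rfl, hdense⟩) hcard

lemma normDensity_eq_weakSeqDensity : normDensity E = weakSeqDensity E := by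
  refine le_antisymm ?_ ?_
  · refine le_csInf weakSet_nonempty ?_
    rintro c ⟨A, rfl, hA⟩
    exact normDensity_le_of_weak A hA
  · refine le_csInf ⟨#(Set.univ : Set E), Set.univ, rfl, dense_univ⟩ ?_
    rintro c ⟨A, rfl, hA⟩
    refine csInf_le' ⟨A, rfl, fun x => ?_⟩
    obtain ⟨s, hs, hst⟩ := mem_closure_iff_seq_limit.mp (hA x)
    exact ⟨s, hs, fun φ => ((φ.continuous.tendsto x).comp hst)⟩

end Aux

theorem stmt_15 {E F : Type u} [NormedAddCommGroup E] [NormedSpace ℝ E] [CompleteSpace E]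
    [NormedAddCommGroup F] [NormedSpace ℝ F] [CompleteSpace F] :
    normDensity E = weakSeqDensity E ∧
    ((∃ T : E ≃ F,
        (∀ (x : ℕ → E) (l : E), WeaklyConvergentSeq x l →
          WeaklyConvergentSeq (fun n => T (x n)) (T l)) ∧
        (∀ (x : ℕ → F) (l : F), WeaklyConvergentSeq x l →
          WeaklyConvergentSeq (fun n => T.symm (x n)) (T.symm l))) →
      normDensity E = normDensity F) := by
  refine ⟨normDensity_eq_weakSeqDensity, ?_⟩
  rintro ⟨T, hT, hTsymm⟩
  have key : ∀ {G H : Type u} [NormedAddCommGroup G] [NormedSpace ℝ G]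
      [NormedAddCommGroup H] [NormedSpace ℝ H] (S : G ≃ H),
      (∀ (x : ℕ → G) (l : G), WeaklyConvergentSeq x l →
        WeaklyConvergentSeq (fun n => S (x n)) (S l)) →
      weakSeqDensity H ≤ weakSeqDensity G := by
    intro G H _ _ _ _ S hS
    refine le_csInf weakSet_nonempty ?_
    rintro c ⟨A, rfl, hA⟩
    have hmem : weakSeqDensity H ≤ #(S '' A) := by
      refine csInf_le' ⟨S '' A, rfl, fun y => ?_⟩
      obtain ⟨s, hs, hw⟩ := hA (S.symm y)
      refine ⟨fun n => S (s n), fun n => ⟨s n, hs n, rfl⟩, ?_⟩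
      have := hS s (S.symm y) hw
      rwa [S.apply_symm_apply] at this
    rwa [Cardinal.mk_image_eq S.injective] at hmem
  have h1 : weakSeqDensity F ≤ weakSeqDensity E := key T hT
  have h2 : weakSeqDensity E ≤ weakSeqDensity F := key T.symm hTsymm
  rw [normDensity_eq_weakSeqDensity, normDensity_eq_weakSeqDensity]
  exact le_antisymm h2 h1
end
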